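/- For all nonnegative integers n: r_n(s, q^2) = sum_{j=0}^{floor(n/2)} (-1)^j q^{j^2} (q; q^2)_j (n choose 2j)_q s^j r_{n-2j}(s, q), where r_m(s, q^2) = sum_{k=0}^m (m choose k)_{q^2} s^k. -/

import Mathlib

open Finset

/-- Gaussian (q-)binomial coefficient, defined over any commutative ring by the
Pascal-type recurrence `[n+1, k+1] = [n, k] + q^(k+1) * [n, k+1]`. -/
def qbinom {R : Type*} [CommRing R] (q : R) : ℕ → ℕ → R
  | _, 0 => 1
  | 0, _ + 1 => 0
  | n + 1, k + 1 => qbinom q n k + q ^ (k + 1) * qbinom q n (k + 1)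
/-- Rogers-Szegő polynomial `r_n(s,q) = ∑_{j=0}^n [n,j]_q s^j`. -/
def rs {R : Type*} [CommRing R] (n : ℕ) (s q : R) : R :=
  ∑ j ∈ Finset.range (n + 1), qbinom q n j * s ^ j

/-!
Comparing coefficients of `s^k`, the theorem is the identity
`[n,k]_{q^2} = ∑_j (-1)^j q^{j^2} (q;q^2)_j [n,2j]_q [n-2j,k-j]_q`.
Since `[n,2j][n-2j,k-j] = [n,k+j][k+j,2j]`, all dependence on `n` sits in `[n,k+j]_q`, and the
identity reads `[n,k]_{q^2} = ∑_j c_{k,j} [n,k+j]_q` with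
`c_{k,j} = (-1)^j q^{j^2} (q;q^2)_j [k+j,2j]_q`. This follows by induction on `n`: the
`q`-Pascal rule for `[n+1,k+j+1]_q` turns the `q^2`-Pascal rule for the left side into the
recurrence `c_{k+1,j+1} + q^{k+j+1} c_{k+1,j} = c_{k,j+1} + q^{2k+2} c_{k+1,j}`, which is the
absorption identity `(1 - q^{r+1}) [m,r+1] = (1 - q^{m-r}) [m,r]` in disguise.
-/

section QBinom

variable {R : Type*} [CommRing R] (q : R)

@[simp]
lemma qbinom_zero_right (n : ℕ) : qbinom q n 0 = 1 := by cases n <;> rfl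

lemma qbinom_succ_succ (n k : ℕ) :
    qbinom q (n + 1) (k + 1) = qbinom q n k + q ^ (k + 1) * qbinom q n (k + 1) := rfl

lemma qbinom_eq_zero_of_lt {n k : ℕ} (h : n < k) : qbinom q n k = 0 := by
  induction n generalizing k with
  | zero => obtain ⟨k, rfl⟩ := Nat.exists_eq_add_one.mpr h; rfl
  | succ n ih =>
    obtain ⟨k, rfl⟩ := Nat.exists_eq_add_one.mpr (Nat.zero_lt_of_lt h)
    rw [qbinom_succ_succ, ih (by omega), ih (by omega), mul_zero, add_zero]

@[simp]
lemma qbinom_self (n : ℕ) : qbinom q n n = 1 := by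
  induction n with
  | zero => rfl
  | succ n ih =>
    rw [qbinom_succ_succ, ih, qbinom_eq_zero_of_lt q n.lt_succ_self, mul_zero, add_zero]

lemma qbinom_succ_succ' (n k : ℕ) :
    qbinom q (n + 1) (k + 1) = q ^ (n - k) * qbinom q n k + qbinom q n (k + 1) := by
  induction n generalizing k with
  | zero => cases k <;> simp [qbinom_eq_zero_of_lt]
  | succ n ih =>
    rw [qbinom_succ_succ q (n + 1) k]
    rcases k with _ | k
    · have h0 := ih 0
      simp only [Nat.sub_zero, qbinom_zero_right, mul_one] at h0 ⊢
      linear_combination q * h0 - qbinom_succ_succ q n 0 - qbinom_zero_right q n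
    have hpow : qbinom q n (k + 1) * (q ^ (k + 1 + 1) * q ^ (n - (k + 1))) =
        qbinom q n (k + 1) * (q ^ (n - k) * q ^ (k + 1)) := by
      rcases lt_or_ge n (k + 1) with hn | hk
      · rw [qbinom_eq_zero_of_lt q hn, zero_mul, zero_mul]
      · rw [← pow_add, ← pow_add, show k + 1 + 1 + (n - (k + 1)) = n - k + (k + 1) by omega]
    rw [Nat.add_sub_add_right]
    linear_combination ih k + q ^ (k + 1 + 1) * ih (k + 1) - q ^ (n - k) * qbinom_succ_succ q n k
      - qbinom_succ_succ q n (k + 1) + hpow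

lemma qbinom_succ_right_eq (n k : ℕ) :
    (1 - q ^ (k + 1)) * qbinom q n (k + 1) = (1 - q ^ (n - k)) * qbinom q n k := by
  linear_combination qbinom_succ_succ q n k - qbinom_succ_succ' q n k

lemma qbinom_mul_qbinom (n a b : ℕ) :
    qbinom q n (a + b) * qbinom q (a + b) a = qbinom q n a * qbinom q (n - a) b := by
  induction n generalizing a b with
  | zero => cases a <;> simp [qbinom_eq_zero_of_lt]
  | succ n ih =>
    rcases a with _ | a
    · simp
    rcases b with _ | b
    · simp
    have hsplit : qbinom q n (a + 1) * qbinom q (n - a) (b + 1) =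
        qbinom q n (a + 1) * (qbinom q (n - (a + 1)) b +
          q ^ (b + 1) * qbinom q (n - (a + 1)) (b + 1)) := by
      rcases lt_or_ge a n with ha | ha
      · rw [show n - a = n - (a + 1) + 1 by omega, qbinom_succ_succ]
      · rw [qbinom_eq_zero_of_lt q (by omega : n < a + 1), zero_mul, zero_mul]
    have h1 := ih a (b + 1)
    have h2 := ih (a + 1) b
    have h3 := ih (a + 1) (b + 1)
    rw [show a + (b + 1) = a + b + 1 by ring] at h1
    rw [show a + 1 + b = a + b + 1 by ring] at h2
    rw [show a + 1 + (b + 1) = a + b + 1 + 1 by ring] at h3 ⊢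
    rw [Nat.add_sub_add_right]
    linear_combination qbinom q (a + b + 1 + 1) (a + 1) * qbinom_succ_succ q n (a + b + 1)
      + qbinom q n (a + b + 1) * qbinom_succ_succ q (a + b + 1) a
      - qbinom q (n - a) (b + 1) * qbinom_succ_succ q n a
      + h1 + q ^ (a + 1) * h2 + q ^ (a + b + 1 + 1) * h3 - q ^ (a + 1) * hsplit

end QBinom

section Expansion

variable {R : Type*} [CommRing R] (q : R)

def signedOddPochhammer (j : ℕ) : R :=
  (-1) ^ j * q ^ (j ^ 2) * ∏ i ∈ range j, (1 - q ^ (2 * i + 1))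

@[simp]
lemma signedOddPochhammer_zero : signedOddPochhammer q 0 = 1 := by simp [signedOddPochhammer]

lemma signedOddPochhammer_succ (j : ℕ) :
    signedOddPochhammer q (j + 1) =
      -(q ^ (2 * j + 1) * (1 - q ^ (2 * j + 1))) * signedOddPochhammer q j := by
  rw [signedOddPochhammer, signedOddPochhammer, prod_range_succ,
    show (j + 1) ^ 2 = j ^ 2 + (2 * j + 1) by ring, pow_add]
  ring

def expansionCoeff (k j : ℕ) : R := signedOddPochhammer q j * qbinom q (k + j) (2 * j)

@[simp]
lemma expansionCoeff_zero_right (k : ℕ) : expansionCoeff q k 0 = 1 := by simp [expansionCoeff]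

lemma expansionCoeff_succ_self (k : ℕ) : expansionCoeff q k (k + 1) = 0 := by
  rw [expansionCoeff, qbinom_eq_zero_of_lt q (by omega), mul_zero]

lemma expansionCoeff_recurrence {j k : ℕ} (hjk : j ≤ k) :
    expansionCoeff q (k + 1) (j + 1) + q ^ (k + j + 1) * expansionCoeff q (k + 1) j =
      expansionCoeff q k (j + 1) + q ^ (2 * k + 2) * expansionCoeff q (k + 1) j := by
  obtain ⟨t, rfl⟩ := Nat.exists_eq_add_of_le hjk
  have hpascal := qbinom_succ_succ' q (j + t + j + 1) (2 * j + 1)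
  have habsorb := qbinom_succ_right_eq q (j + t + j + 1) (2 * j)
  rw [show j + t + j + 1 - (2 * j + 1) = t by omega] at hpascal
  rw [show j + t + j + 1 - 2 * j = t + 1 by omega] at habsorb
  simp only [expansionCoeff, signedOddPochhammer_succ,
    show j + t + 1 + (j + 1) = j + t + j + 1 + 1 by ring,
    show j + t + (j + 1) = j + t + j + 1 by ring, show j + t + 1 + j = j + t + j + 1 by ring,
    show 2 * (j + 1) = 2 * j + 1 + 1 by ring]
  linear_combination
    (-(q ^ (2 * j + 1) * (1 - q ^ (2 * j + 1))) * signedOddPochhammer q j) * hpascal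
      - q ^ (2 * j + t + 1) * signedOddPochhammer q j * habsorb

lemma sum_expansionCoeff_pascal (k : ℕ) (a : ℕ → R) :
    ∑ j ∈ range (k + 1 + 1), expansionCoeff q (k + 1) j * (a j + q ^ (k + j + 1) * a (j + 1)) =
      ∑ j ∈ range (k + 1), expansionCoeff q k j * a j +
        q ^ (2 * k + 2) * ∑ j ∈ range (k + 1 + 1), expansionCoeff q (k + 1) j * a (j + 1) := by
  have hkey : ∑ j ∈ range (k + 1), (expansionCoeff q (k + 1) (j + 1) * a (j + 1)
        + expansionCoeff q (k + 1) j * (q ^ (k + j + 1) * a (j + 1))) =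
      ∑ j ∈ range (k + 1), (expansionCoeff q k (j + 1) * a (j + 1)
        + q ^ (2 * k + 2) * (expansionCoeff q (k + 1) j * a (j + 1))) :=
    sum_congr rfl fun j hj => by
      linear_combination a (j + 1) *
        expansionCoeff_recurrence q (Nat.lt_succ_iff.mp (mem_range.mp hj))
  have hshift : ∑ j ∈ range (k + 1), expansionCoeff q k j * a j =
      ∑ j ∈ range (k + 1), expansionCoeff q k (j + 1) * a (j + 1) + a 0 := by
    rw [sum_range_succ' _ k, sum_range_succ (fun j => expansionCoeff q k (j + 1) * a (j + 1)) k,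
      expansionCoeff_succ_self, expansionCoeff_zero_right, zero_mul, add_zero, one_mul]
  rw [sum_add_distrib, sum_add_distrib, ← mul_sum] at hkey
  simp only [hshift, mul_add, sum_add_distrib]
  rw [sum_range_succ' (fun j => expansionCoeff q (k + 1) j * a j),
    sum_range_succ (fun j => expansionCoeff q (k + 1) j * (q ^ (k + j + 1) * a (j + 1))),
    sum_range_succ (fun j => expansionCoeff q (k + 1) j * a (j + 1)), expansionCoeff_zero_right]
  linear_combination hkey

theorem qbinom_sq_eq_sum_expansionCoeff_mul (n k : ℕ) :
    qbinom (q ^ 2) n k = ∑ j ∈ range (k + 1), expansionCoeff q k j * qbinom q n (k + j) := by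
  induction n generalizing k with
  | zero =>
    rcases k with _ | k
    · simp
    · refine (sum_eq_zero fun j _ => ?_).symm
      rw [qbinom_eq_zero_of_lt q (by omega : 0 < k + 1 + j), mul_zero]
  | succ n ih =>
    rcases k with _ | k
    · simp
    have hpascal (j : ℕ) : qbinom q (n + 1) (k + 1 + j) =
        qbinom q n (k + j) + q ^ (k + j + 1) * qbinom q n (k + (j + 1)) := by
      rw [Nat.add_right_comm, qbinom_succ_succ, add_assoc]
    rw [qbinom_succ_succ, ih, ih]
    simp only [hpascal, sum_expansionCoeff_pascal]
    ring_nf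

theorem qbinom_sq_eq_sum_qbinom_mul_qbinom (n k : ℕ) :
    qbinom (q ^ 2) n k = ∑ j ∈ range (k + 1),
      signedOddPochhammer q j * qbinom q n (2 * j) * qbinom q (n - 2 * j) (k - j) := by
  rw [qbinom_sq_eq_sum_expansionCoeff_mul]
  refine sum_congr rfl fun j hj => ?_
  have hjk : 2 * j + (k - j) = k + j := by have := mem_range.mp hj; omega
  rw [expansionCoeff, mul_assoc, mul_assoc, mul_comm (qbinom q (k + j) _), ← hjk,
    qbinom_mul_qbinom]

lemma rs_eq_sum_range {n N : ℕ} (h : n < N) (s : R) :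
    rs n s q = ∑ i ∈ range N, qbinom q n i * s ^ i :=
  (eventually_constant_sum (fun i hi => by rw [qbinom_eq_zero_of_lt q hi, zero_mul]) h).symm

end Expansion

theorem stmt11 {R : Type*} [CommRing R] (s q : R) (n : ℕ) :
    rs n s (q ^ 2) =
      ∑ j ∈ Finset.range (n / 2 + 1),
        (-1 : R) ^ j * q ^ (j ^ 2) * (∏ i ∈ Finset.range j, (1 - q ^ (2 * i + 1))) *
          qbinom q n (2 * j) * s ^ j * rs (n - 2 * j) s q := by
  let term (j i : ℕ) : R := signedOddPochhammer q j * qbinom q n (2 * j) * s ^ j *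
    (qbinom q (n - 2 * j) i * s ^ i)
  calc rs n s (q ^ 2)
      = ∑ k ∈ range (n + 1), ∑ j ∈ range (k + 1), term j (k - j) := by
        refine sum_congr rfl fun k _ => ?_
        rw [qbinom_sq_eq_sum_qbinom_mul_qbinom, sum_mul]
        refine sum_congr rfl fun j hj => ?_
        rw [← pow_mul_pow_sub s (Nat.lt_succ_iff.mp (mem_range.mp hj))]
        ring
    _ = ∑ j ∈ range (n + 1), ∑ i ∈ range (n + 1 - j), term j i := sum_range_diag_flip _ _
    _ = ∑ j ∈ range (n + 1), signedOddPochhammer q j * qbinom q n (2 * j) * s ^ j *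
          rs (n - 2 * j) s q := by
        refine sum_congr rfl fun j hj => ?_
        have hlt : n - 2 * j < n + 1 - j := by have := mem_range.mp hj; omega
        rw [← mul_sum, rs_eq_sum_range q hlt]
    _ = ∑ j ∈ range (n / 2 + 1), signedOddPochhammer q j * qbinom q n (2 * j) * s ^ j *
          rs (n - 2 * j) s q :=
        eventually_constant_sum (fun j hj => by rw [qbinom_eq_zero_of_lt q (by omega)]; ring)
          (by omega)
    _ = _ := sum_congr rfl fun j _ => by rw [signedOddPochhammer]
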